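/- arXiv:0711.3936 — 2 statements merged into one kernel-verified Lean document; each statement's English description precedes it below -/
import Mathlib

section
/- On the unit sphere S² with a small open geodesic disk around the east pole removed, there exists a nonzero continuous function f (equal to 1 on a small disk centered at the north pole, −1 on the antipodal disk centered at the south pole, and 0 elsewhere) whose integral along every maximal geodesic segment of the resulting manifold with boundary is zero. -/
open scoped RealInnerProductSpace

/-- integral of an antiperiodic continuous function over a full period vanishes. -/
lemma sec_anti_integral {g : ℝ → ℝ} (hg : Continuous g)
    (hanti : ∀ t, g (t + Real.pi) = - g t) (c : ℝ) :
    ∫ t in c..(c + 2*Real.pi), g t = 0 := by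
  have h1 : (∫ t in c..(c+Real.pi), g t) + ∫ t in (c+Real.pi)..(c+2*Real.pi), g t
      = ∫ t in c..(c+2*Real.pi), g t :=
    intervalIntegral.integral_add_adjacent_intervals
      (hg.intervalIntegrable _ _) (hg.intervalIntegrable _ _)
  have h2 : (∫ t in (c+Real.pi)..(c+2*Real.pi), g t) = - ∫ t in c..(c+Real.pi), g t := by
    have h3 := intervalIntegral.integral_comp_add_right (a := c) (b := c+Real.pi) g Real.pi
    rw [show c + Real.pi + Real.pi = c + 2*Real.pi by ring] at h3
    rw [← h3]
    simp [hanti, intervalIntegral.integral_neg]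
  linarith

/-- key trigonometric lemma: if `A cos t + B sin t` equals `c > 0` at `a` and `b`,
and is `≤ c` at the midpoint, then it is `≥ c` on the complementary arc. -/
lemma sec_key_trig (A B c a b : ℝ) (hc : 0 < c) (hab : a < b) (hb2 : b < a + 2*Real.pi)
    (ha' : Real.cos a * A + Real.sin a * B = c)
    (hb' : Real.cos b * A + Real.sin b * B = c)
    (hm : Real.cos ((a+b)/2) * A + Real.sin ((a+b)/2) * B ≤ c) :
    ∀ t, b ≤ t → t ≤ a + 2*Real.pi → c ≤ Real.cos t * A + Real.sin t * B := by
  set m := (a+b)/2 with hmdef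
  set d := (b-a)/2 with hddef
  have hd0 : 0 < d := by simp [hddef]; linarith
  have hdπ : d < Real.pi := by rw [hddef]; linarith
  set P := Real.cos m * A + Real.sin m * B with hP
  set Q := Real.cos m * B - Real.sin m * A with hQ
  have expand : ∀ s, Real.cos (m+s) * A + Real.sin (m+s) * B
      = P * Real.cos s + Q * Real.sin s := by
    intro s
    rw [Real.cos_add, Real.sin_add, hP, hQ]; ring
  have ea : P * Real.cos d - Q * Real.sin d = c := by
    have := expand (-d)
    rw [show m + -d = a by rw [hmdef, hddef]; ring] at this
    rw [Real.cos_neg, Real.sin_neg] at this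
    linarith [ha']
  have eb : P * Real.cos d + Q * Real.sin d = c := by
    have := expand d
    rw [show m + d = b by rw [hmdef, hddef]; ring] at this
    linarith [hb']
  have hsind : 0 < Real.sin d := Real.sin_pos_of_pos_of_lt_pi hd0 hdπ
  have hQ0 : Q = 0 := by nlinarith
  have ePc : P * Real.cos d = c := by linarith
  have hPle : P ≤ c := hm
  have hcosd : Real.cos d < 0 := by
    rcases lt_trichotomy (Real.cos d) 0 with h | h | h
    · exact h
    · rw [h] at ePc; nlinarith
    · have h1 : Real.cos d < 1 := by
        have := Real.cos_lt_cos_of_nonneg_of_le_pi (le_refl 0) hdπ.le hd0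
        simpa using this
      nlinarith
  have hPneg : P < 0 := by nlinarith
  intro t ht1 ht2
  set s := t - m with hs
  have hs1 : d ≤ s := by rw [hs, hddef, hmdef]; linarith
  have hs2 : s ≤ 2*Real.pi - d := by rw [hs, hddef, hmdef]; linarith
  have hcoss : Real.cos s ≤ Real.cos d := by
    rcases le_or_gt s Real.pi with h | h
    · exact Real.cos_le_cos_of_nonneg_of_le_pi hd0.le h hs1
    · rw [← Real.cos_two_pi_sub]
      exact Real.cos_le_cos_of_nonneg_of_le_pi hd0.le (by linarith) (by linarith)
  have := expand s
  rw [show m + s = t by rw [hs]; ring] at this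
  rw [this, hQ0]
  nlinarith

/-- if a continuous odd function is supported in `|⟪x,e⟫| < cos δ`, its integral along
every maximal geodesic of the excised sphere vanishes. -/
lemma sec_geo_vanish (e : EuclideanSpace ℝ (Fin 3)) (f : EuclideanSpace ℝ (Fin 3) → ℝ)
    (δ : ℝ) (hδ1 : 0 < δ) (hδ2 : δ < Real.pi / 2)
    (hf : Continuous f) (hodd : ∀ x, f (-x) = -f x)
    (hsupp : ∀ x, f x ≠ 0 → |⟪x, e⟫| < Real.cos δ)
    (u v : EuclideanSpace ℝ (Fin 3))
    (a b : ℝ) (hab : a ≤ b) (hb2 : b ≤ a + 2 * Real.pi)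
    (hmem : ∀ t ∈ Set.Icc a b, ⟪Real.cos t • u + Real.sin t • v, e⟫ ≤ Real.cos δ)
    (hmax : b = a + 2 * Real.pi ∨
      (⟪Real.cos a • u + Real.sin a • v, e⟫ = Real.cos δ ∧
       ⟪Real.cos b • u + Real.sin b • v, e⟫ = Real.cos δ)) :
    (∫ t in a..b, f (Real.cos t • u + Real.sin t • v)) = 0 := by
  have hc : 0 < Real.cos δ := Real.cos_pos_of_mem_Ioo ⟨by linarith [Real.pi_pos], hδ2⟩
  set g : ℝ → ℝ := fun t => f (Real.cos t • u + Real.sin t • v) with hg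
  have hγcont : Continuous fun t : ℝ => Real.cos t • u + Real.sin t • v := by
    exact (Real.continuous_cos.smul continuous_const).add
      (Real.continuous_sin.smul continuous_const)
  have hgc : Continuous g := hf.comp hγcont
  have hneg : ∀ t : ℝ, Real.cos (t+Real.pi) • u + Real.sin (t+Real.pi) • v
      = -(Real.cos t • u + Real.sin t • v) := by
    intro t
    rw [Real.cos_add_pi, Real.sin_add_pi]
    simp only [neg_smul]; abel
  have hganti : ∀ t, g (t + Real.pi) = -g t := by
    intro t
    rw [hg]
    simp only
    rw [hneg t, hodd]
  have hinner : ∀ t : ℝ, ⟪Real.cos t • u + Real.sin t • v, e⟫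
      = Real.cos t * ⟪u, e⟫ + Real.sin t * ⟪v, e⟫ := by
    intro t
    simp [inner_add_left, real_inner_smul_left, Finset.mul_sum, mul_assoc]
  by_cases hfull : b = a + 2 * Real.pi
  · rw [hfull]
    exact sec_anti_integral hgc hganti a
  rcases hmax with h | ⟨hea, heb⟩
  · exact absurd h hfull
  rcases eq_or_lt_of_le hab with h | hab'
  · rw [← h]; exact intervalIntegral.integral_same
  have hb2' : b < a + 2 * Real.pi := lt_of_le_of_ne hb2 hfull
  have hge := sec_key_trig ⟪u, e⟫ ⟪v, e⟫ (Real.cos δ) a b hc hab' hb2'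
    (by rw [← hinner]; exact hea) (by rw [← hinner]; exact heb)
    (by rw [← hinner]; exact hmem _ ⟨by linarith, by linarith⟩)
  have hzero : ∀ t ∈ Set.uIcc b (a + 2*Real.pi), g t = 0 := by
    intro t ht
    rw [Set.uIcc_of_le (by linarith)] at ht
    by_contra hne
    have h1 := hsupp _ hne
    have h2 := hge t ht.1 ht.2
    rw [hinner] at h1
    have := le_abs_self (Real.cos t * ⟪u, e⟫ + Real.sin t * ⟪v, e⟫)
    linarith
  have hz2 : (∫ t in b..(a+2*Real.pi), g t) = 0 := by
    rw [intervalIntegral.integral_congr hzero]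
    simp
  have hadd : (∫ t in a..b, g t) + ∫ t in b..(a+2*Real.pi), g t
      = ∫ t in a..(a+2*Real.pi), g t :=
    intervalIntegral.integral_add_adjacent_intervals
      (hgc.intervalIntegrable _ _) (hgc.intervalIntegrable _ _)
  have hfullz := sec_anti_integral hgc hganti a
  rw [hz2, hfullz] at hadd
  linarith [hadd]

/-- On the unit sphere S² with a small open geodesic disk of radius `δ`
around the east pole `e` removed, there is a nonzero continuous odd function `f`,
supported in two small antipodal caps around the north pole `N` and the south pole `-N`
(disjoint from the removed disk), with `f N = 1`, `f (-N) = -1`, whose integral along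
every maximal great-circle geodesic segment of the resulting manifold with boundary
vanishes. A maximal geodesic segment is an arc `t ↦ cos t • u + sin t • v`,
`t ∈ [a, b]`, lying in `M = {x ∈ S² : ⟪x, e⟫ ≤ cos δ}`, which is either the full great
circle (`b = a + 2π`) or has both endpoints on the boundary circle `⟪x, e⟫ = cos δ`. -/
theorem sphere_excision_counterexample
    (e N : EuclideanSpace ℝ (Fin 3))
    (he : ‖e‖ = 1) (hN : ‖N‖ = 1) (heN : ⟪e, N⟫ = 0) :
    ∃ (δ r : ℝ) (f : EuclideanSpace ℝ (Fin 3) → ℝ),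
      0 < δ ∧ δ < Real.pi / 2 ∧ 0 < r ∧
      Continuous f ∧
      (∀ x, f (-x) = -f x) ∧
      f N = 1 ∧ f (-N) = -1 ∧
      (∃ x, ‖x‖ = 1 ∧ f x ≠ 0) ∧
      (∀ x, f x ≠ 0 → (‖x - N‖ < r ∨ ‖x + N‖ < r)) ∧
      (∀ x, f x ≠ 0 → |⟪x, e⟫| < Real.cos δ) ∧
      (∀ u v : EuclideanSpace ℝ (Fin 3), ‖u‖ = 1 → ‖v‖ = 1 → ⟪u, v⟫ = 0 →
        ∀ a b : ℝ, a ≤ b → b ≤ a + 2 * Real.pi →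
        (∀ t ∈ Set.Icc a b, ⟪Real.cos t • u + Real.sin t • v, e⟫ ≤ Real.cos δ) →
        (b = a + 2 * Real.pi ∨
          (⟪Real.cos a • u + Real.sin a • v, e⟫ = Real.cos δ ∧
           ⟪Real.cos b • u + Real.sin b • v, e⟫ = Real.cos δ)) →
        (∫ t in a..b, f (Real.cos t • u + Real.sin t • v)) = 0) := by
  have hpi := Real.pi_pos
  set f : EuclideanSpace ℝ (Fin 3) → ℝ :=
    fun x => max 0 (1 - 4 * ‖x - N‖) - max 0 (1 - 4 * ‖x + N‖) with hfdef
  have hfcont : Continuous f := by rw [hfdef]; fun_prop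
  have hodd : ∀ x, f (-x) = -f x := by
    intro x
    rw [hfdef]
    simp only
    rw [show -x - N = -(x + N) by abel, show -x + N = -(x - N) by abel,
      norm_neg, norm_neg]
    ring
  have hfN : f N = 1 := by
    rw [hfdef]
    simp only
    rw [sub_self, norm_zero, show N + N = (2:ℝ) • N from (two_smul ℝ N).symm,
      norm_smul, hN]
    norm_num
  have hsmall : ∀ x, f x ≠ 0 → (‖x - N‖ < 1/4 ∨ ‖x + N‖ < 1/4) := by
    intro x hx
    by_contra hcon
    push_neg at hcon
    apply hx
    rw [hfdef]
    simp only
    rw [max_eq_left (by linarith [hcon.1]), max_eq_left (by linarith [hcon.2]), sub_self]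
  have hsupp : ∀ x, f x ≠ 0 → |⟪x, e⟫| < Real.cos (Real.pi/4) := by
    intro x hx
    have hNe : ⟪N, e⟫ = (0:ℝ) := by rw [real_inner_comm]; exact heN
    have hsq : Real.sqrt 2 > 1 := by
      nlinarith [Real.sq_sqrt (show (0:ℝ) ≤ 2 by norm_num), Real.sqrt_nonneg 2]
    rw [Real.cos_pi_div_four]
    have hb : |⟪x, e⟫| < 1/4 := by
      rcases hsmall x hx with h | h
      · have hxe : ⟪x, e⟫ = ⟪x - N, e⟫ + ⟪N, e⟫ := by
          rw [← inner_add_left]; congr 1; abel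
        rw [hxe, hNe, add_zero]
        calc |⟪x - N, e⟫| ≤ ‖x - N‖ * ‖e‖ := abs_real_inner_le_norm _ _
          _ = ‖x - N‖ := by rw [he, mul_one]
          _ < 1/4 := h
      · have hxe : ⟪x, e⟫ = ⟪x + N, e⟫ - ⟪N, e⟫ := by
          rw [← inner_sub_left]; congr 1; abel
        rw [hxe, hNe, sub_zero]
        calc |⟪x + N, e⟫| ≤ ‖x + N‖ * ‖e‖ := abs_real_inner_le_norm _ _
          _ = ‖x + N‖ := by rw [he, mul_one]
          _ < 1/4 := h
    linarith
  refine ⟨Real.pi/4, 1/2, f, by linarith, by linarith, by norm_num, hfcont, hodd, hfN,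
    ?_, ⟨N, hN, by rw [hfN]; exact one_ne_zero⟩, ?_, hsupp, ?_⟩
  · rw [hodd, hfN]
  · intro x hx
    rcases hsmall x hx with h | h
    · exact Or.inl (by linarith)
    · exact Or.inr (by linarith)
  · intro u v hu hv huv a b hab hb2 hmem hmax
    exact sec_geo_vanish e f (Real.pi/4) (by linarith) (by linarith)
      hfcont hodd hsupp u v a b hab hb2 hmem hmax
end

section
/- Let f ∈ L²(ℝ²) have compact support and suppose the X-ray transform of f vanishes on all lines in an open set A of lines such that every line in A can be continuously deformed within A to a line disjoint from supp f. Assume further the microlocal regularity input: for every line ℓ ∈ A on which all nearby X-ray integrals of f vanish, the analytic wavefront set of f contains no conormal direction to ℓ. Then f = 0 on the union of the lines in A. -/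
open scoped RealInnerProductSpace

open Set Module

/-!
Sweep the line through the deformation `q`. The parameters `s ∈ [0, 1]` for which the line `q s`
meets `K = tsupport f` form a compact set containing `0` but not `1`; let `s₀` be its largest
element and `p ∈ K` a contact point on `q s₀`. For `y ∈ K`, the signed distance from `y` to the
line `q s` (an inner product with the rotated direction) cannot change sign on `[s₀, 1]`, by the
intermediate value theorem, since `y` lies on no line `q s` with `s > s₀`. Near `p`, the sign at
`s = 1` is that of `p` itself, so `K` lies locally on one side of `q s₀`, and the conormal of
`q s₀` pointing to the other side is an exterior conormal to `K` at `p`. The microlocal hypothesis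
excludes it from `WFa`, and unique continuation then gives `p ∉ K`.
-/

section Lines

variable {E : Type*} [NormedAddCommGroup E] [InnerProductSpace ℝ E]

def xrayLine (ℓ : E × E) : Set E := range fun t : ℝ => ℓ.1 + t • ℓ.2

theorem isCompact_setOf_xrayLine_meets {X : Type*} [TopologicalSpace X] [T2Space X]
    {I : Set X} (hI : IsCompact I) {q : X → E × E} (hq : ContinuousOn q I)
    (hunit : ∀ s ∈ I, ‖(q s).2‖ = 1) {K : Set E} (hK : IsCompact K) :
    IsCompact {s ∈ I | (xrayLine (q s) ∩ K).Nonempty} := by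
  obtain ⟨R, hR⟩ := hK.isBounded.subset_closedBall 0
  obtain ⟨Z, hZ⟩ := hI.exists_bound_of_continuousOn (continuous_fst.comp_continuousOn hq)
  set D := I ×ˢ Icc (-(R + Z)) (R + Z)
  set F : X × ℝ → E := fun st => (q st.1).1 + st.2 • (q st.1).2
  have hqD : ContinuousOn (fun st : X × ℝ => q st.1) D :=
    hq.comp continuousOn_fst fun _ h => h.1
  have hF : ContinuousOn F D :=
    (continuous_fst.comp_continuousOn hqD).add
      (continuous_snd.continuousOn.smul (continuous_snd.comp_continuousOn hqD))
  have hC : IsCompact (D ∩ F ⁻¹' K) :=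
    (hI.prod isCompact_Icc).of_isClosed_subset
      (hF.preimage_isClosed_of_isClosed (hI.isClosed.prod isClosed_Icc) hK.isClosed)
      inter_subset_left
  convert hC.image continuous_fst using 1
  ext s
  constructor
  · rintro ⟨hs, _, ⟨t, rfl⟩, hyK⟩
    have ht : |t| ≤ R + Z := by
      have hy : ‖(q s).1 + t • (q s).2‖ ≤ R := mem_closedBall_zero_iff.1 (hR hyK)
      have := norm_sub_le ((q s).1 + t • (q s).2) (q s).1
      rw [add_sub_cancel_left, norm_smul, hunit s hs, mul_one, Real.norm_eq_abs] at this
      linarith [show ‖(q s).1‖ ≤ Z from hZ s hs]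
    exact ⟨(s, t), ⟨⟨hs, abs_le.1 ht⟩, hyK⟩, rfl⟩
  · rintro ⟨⟨s, t⟩, ⟨⟨hs, -⟩, hyK⟩, rfl⟩
    exact ⟨hs, _, ⟨t, rfl⟩, hyK⟩

theorem inner_sub_mul_inner_sub_pos_of_dist_lt {n z p y : E} (hn : ‖n‖ = 1)
    (hy : dist y p < |⟪n, p - z⟫|) : 0 < ⟪n, p - z⟫ * ⟪n, y - z⟫ := by
  have hnear : |⟪n, y - p⟫| < |⟪n, p - z⟫| := by
    refine (abs_real_inner_le_norm _ _).trans_lt ?_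
    rwa [hn, one_mul, ← dist_eq_norm]
  have := mul_lt_mul_of_pos_left hnear ((abs_nonneg _).trans_lt hnear)
  rw [← abs_mul, abs_mul_abs_self] at this
  rw [← sub_add_sub_cancel y p, inner_add_right, mul_add]
  linarith [neg_abs_le (⟪n, p - z⟫ * ⟪n, y - p⟫)]

end Lines

theorem exists_mem_Ioo_eq_zero_of_mul_neg {α : Type*} [ConditionallyCompleteLinearOrder α]
    [TopologicalSpace α] [OrderTopology α] [DenselyOrdered α] {a b : α} {f : α → ℝ}
    (hab : a ≤ b) (hf : ContinuousOn f (Icc a b)) (h : f a * f b < 0) :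
    ∃ c ∈ Ioo a b, f c = 0 := by
  rcases mul_neg_iff.1 h with ⟨ha, hb⟩ | ⟨ha, hb⟩
  · exact intermediate_value_Ioo' hab hf ⟨hb, ha⟩
  · exact intermediate_value_Ioo hab hf ⟨ha, hb⟩

namespace Orientation

variable {E : Type*} [NormedAddCommGroup E] [InnerProductSpace ℝ E] [Fact (finrank ℝ E = 2)]
  (o : Orientation ℝ E (Fin 2))

local notation "ω" => o.areaForm
local notation "J" => o.rightAngleRotation

theorem areaForm_eq_zero_iff_exists_smul_eq {x : E} (hx : x ≠ 0) (v : E) :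
    ω x v = 0 ↔ ∃ t : ℝ, t • x = v := by
  constructor
  · intro h
    have hx2 : ‖x‖ ^ 2 ≠ 0 := by positivity
    refine ⟨⟪x, v⟫ / ‖x‖ ^ 2, ?_⟩
    rw [← sub_eq_zero, ← inner_self_eq_zero (𝕜 := ℝ)]
    have hinner := o.inner_mul_inner_add_areaForm_mul_areaForm x v ((⟪x, v⟫ / ‖x‖ ^ 2) • x - v)
    rw [h, zero_mul, add_zero] at hinner
    rw [inner_sub_left, real_inner_smul_left, div_mul_eq_mul_div, div_sub' hx2, hinner, sub_self,
      zero_div]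
  · rintro ⟨t, rfl⟩
    simp

theorem inner_rightAngleRotation_sub_eq_zero_iff {ℓ : E × E} (hℓ : ℓ.2 ≠ 0) (y : E) :
    ⟪J ℓ.2, y - ℓ.1⟫ = 0 ↔ y ∈ xrayLine ℓ := by
  rw [inner_rightAngleRotation_left, o.areaForm_eq_zero_iff_exists_smul_eq hℓ, xrayLine]
  simp only [mem_range, eq_sub_iff_add_eq, add_comm]

theorem inner_rightAngleRotation_mul_nonneg_of_isGreatest {a b : ℝ} {q : ℝ → E × E}
    (hq : ContinuousOn q (Icc a b)) (hdir : ∀ s ∈ Icc a b, (q s).2 ≠ 0) {K : Set E} {s₀ : ℝ}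
    (hs₀ : IsGreatest {s ∈ Icc a b | (xrayLine (q s) ∩ K).Nonempty} s₀) {y : E} (hy : y ∈ K) :
    0 ≤ ⟪J (q s₀).2, y - (q s₀).1⟫ * ⟪J (q b).2, y - (q b).1⟫ := by
  by_contra! hneg
  have hsub : Icc s₀ b ⊆ Icc a b := Icc_subset_Icc_left hs₀.1.1.1
  have hG : ContinuousOn (fun s => ⟪J (q s).2, y - (q s).1⟫) (Icc s₀ b) :=
    ((o.rightAngleRotation.continuous.comp continuous_snd).comp_continuousOn (hq.mono hsub)).inner
      (continuousOn_const.sub (continuous_fst.comp_continuousOn (hq.mono hsub)))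
  obtain ⟨c, hc, hGc⟩ := exists_mem_Ioo_eq_zero_of_mul_neg hs₀.1.1.2 hG hneg
  have hcI : c ∈ Icc a b := hsub (Ioo_subset_Icc_self hc)
  have hyc : y ∈ xrayLine (q c) := (o.inner_rightAngleRotation_sub_eq_zero_iff (hdir c hcI) y).1 hGc
  exact hc.1.not_ge (hs₀.2 ⟨hcI, y, hyc, hy⟩)

end Orientation

open Metric Topology in
theorem exists_exterior_conormal_of_sweep {E : Type*} [NormedAddCommGroup E]
    [InnerProductSpace ℝ E] [Fact (finrank ℝ E = 2)] {q : ℝ → E × E}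
    (hq : ContinuousOn q (Icc 0 1)) (hunit : ∀ s ∈ Icc (0 : ℝ) 1, ‖(q s).2‖ = 1) {K : Set E}
    (hK : IsCompact K) (h₀ : (xrayLine (q 0) ∩ K).Nonempty) (h₁ : Disjoint (xrayLine (q 1)) K) :
    ∃ s ∈ Icc (0 : ℝ) 1, ∃ p ∈ xrayLine (q s) ∩ K, ∃ ξ : E, ξ ≠ 0 ∧ ⟪ξ, (q s).2⟫ = 0 ∧
      ∃ U ∈ 𝓝 p, ∀ y ∈ K ∩ U, ⟪ξ, y - p⟫ ≤ 0 := by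
  have : FiniteDimensional ℝ E := .of_fact_finrank_eq_two
  let o : Orientation ℝ E (Fin 2) := (finBasisOfFinrankEq ℝ E Fact.out).orientation
  have hdir (s) (hs : s ∈ Icc (0 : ℝ) 1) : (q s).2 ≠ 0 := by
    rw [← norm_ne_zero_iff, hunit s hs]; exact one_ne_zero
  have h1I : (1 : ℝ) ∈ Icc 0 1 := right_mem_Icc.2 zero_le_one
  obtain ⟨s₀, hs₀⟩ := (isCompact_setOf_xrayLine_meets isCompact_Icc hq hunit hK).exists_isGreatest
    ⟨0, left_mem_Icc.2 zero_le_one, h₀⟩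
  obtain ⟨hs₀I, p, hpℓ, hpK⟩ := hs₀.1
  set J := o.rightAngleRotation
  -- the signed distance from `p` to the final line, nonzero as that line misses `K`
  set c := ⟪J (q 1).2, p - (q 1).1⟫
  have hc : c ≠ 0 := fun h =>
    h₁.ne_of_mem ((o.inner_rightAngleRotation_sub_eq_zero_iff (hdir 1 h1I) p).1 h) hpK rfl
  refine ⟨s₀, hs₀I, p, ⟨hpℓ, hpK⟩, -c • J (q s₀).2,
    smul_ne_zero (neg_ne_zero.2 hc) (J.map_ne_zero_iff.2 (hdir s₀ hs₀I)),
    by rw [real_inner_smul_left, o.inner_rightAngleRotation_self, mul_zero],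
    ball p |c|, ball_mem_nhds p (abs_pos.2 hc), ?_⟩
  rintro y ⟨hyK, hyU⟩
  have hp₀ : ⟪J (q s₀).2, p - (q s₀).1⟫ = 0 :=
    (o.inner_rightAngleRotation_sub_eq_zero_iff (hdir s₀ hs₀I) p).2 hpℓ
  have h₀y : ⟪J (q s₀).2, y - (q s₀).1⟫ = ⟪J (q s₀).2, y - p⟫ := by
    rw [← sub_add_sub_cancel y p, inner_add_right, hp₀, add_zero]
  have hside₁ : 0 < c * ⟪J (q 1).2, y - (q 1).1⟫ :=
    inner_sub_mul_inner_sub_pos_of_dist_lt (by rw [J.norm_map, hunit 1 h1I]) hyU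
  have hside₀ : 0 ≤ c * ⟪J (q s₀).2, y - p⟫ := by
    have hsame := o.inner_rightAngleRotation_mul_nonneg_of_isGreatest hq hdir hs₀ hyK
    rw [h₀y] at hsame
    refine nonneg_of_mul_nonneg_left ?_ hside₁
    rw [mul_mul_mul_comm]
    exact mul_nonneg (mul_self_nonneg c) hsame
  rw [real_inner_smul_left, neg_mul]
  exact neg_nonpos.2 hside₀

theorem support_theorem_xray_transform_R2_general
    (f : EuclideanSpace ℝ (Fin 2) → ℝ)
    (hsupp : HasCompactSupport f)
    (A : Set (EuclideanSpace ℝ (Fin 2) × EuclideanSpace ℝ (Fin 2)))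
    (hAunit : ∀ ℓ ∈ A, ‖ℓ.2‖ = 1)
    (hdeform : ∀ ℓ ∈ A, ∃ q : ℝ → EuclideanSpace ℝ (Fin 2) × EuclideanSpace ℝ (Fin 2),
      ContinuousOn q (Set.Icc 0 1) ∧ q 0 = ℓ ∧ (∀ s ∈ Set.Icc (0:ℝ) 1, q s ∈ A) ∧
      ∀ t : ℝ, (q 1).1 + t • (q 1).2 ∉ tsupport f)
    (WFa : Set (EuclideanSpace ℝ (Fin 2) × EuclideanSpace ℝ (Fin 2)))
    (hWF : ∀ ℓ ∈ A, ∀ (s : ℝ) (ξ : EuclideanSpace ℝ (Fin 2)),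
      ξ ≠ 0 → ⟪ξ, ℓ.2⟫ = 0 → (ℓ.1 + s • ℓ.2, ξ) ∉ WFa)
    (hKKH : ∀ (p ξ : EuclideanSpace ℝ (Fin 2)), ξ ≠ 0 →
      (∃ φ : EuclideanSpace ℝ (Fin 2) → ℝ, ContDiff ℝ 2 φ ∧ φ p = 0 ∧
        (∀ w, fderiv ℝ φ p w = ⟪ξ, w⟫) ∧
        ∃ U ∈ nhds p, ∀ y ∈ tsupport f ∩ U, φ y ≤ 0) →
      (p, ξ) ∉ WFa → p ∉ tsupport f) :
    ∀ ℓ ∈ A, ∀ t : ℝ, f (ℓ.1 + t • ℓ.2) = 0 := by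
  intro ℓ hℓ t
  refine image_eq_zero_of_notMem_tsupport fun hℓK => ?_
  obtain ⟨q, hqc, rfl, hqA, hq₁⟩ := hdeform ℓ hℓ
  have : Fact (finrank ℝ (EuclideanSpace ℝ (Fin 2)) = 2) := ⟨finrank_euclideanSpace_fin⟩
  obtain ⟨s, hs, p, ⟨⟨r, hr⟩, hpK⟩, ξ, hξ, hξω, U, hU, hside⟩ :=
    exists_exterior_conormal_of_sweep hqc (fun s hs => hAunit _ (hqA s hs)) hsupp
      ⟨_, ⟨t, rfl⟩, hℓK⟩ (disjoint_left.2 fun _ ⟨t, ht⟩ => ht ▸ hq₁ t)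
  have hφ : HasFDerivAt (fun y => ⟪ξ, y - p⟫) (innerSL ℝ ξ) p :=
    (innerSL ℝ ξ).hasFDerivAt.comp p ((hasFDerivAt_id p).sub_const p)
  exact hKKH p ξ hξ ⟨fun y => ⟪ξ, y - p⟫, contDiff_const.inner ℝ (contDiff_id.sub contDiff_const),
    by simp, fun w => by rw [hφ.fderiv]; rfl, U, hU, hside⟩ (hr ▸ hWF _ (hqA s hs) r ξ hξ hξω) hpK

/-- Support theorem for the X-ray transform in ℝ² (the Euclidean model of
Theorem 1). Lines are parameterized by `ℓ = (z, ω)` with `‖ω‖ = 1`, `t ↦ z + t • ω`.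
`f ∈ L²` has compact support, its X-ray transform vanishes on an open set `A` of lines,
each line of `A` can be deformed within `A` to a line disjoint from `supp f`, and we
assume the microlocal regularity input (analytic wavefront set `WFa` of `f` contains no
conormal to any line of `A`) together with the Kawai–Kashiwara–Hörmander unique
continuation property (an exterior conormal at a support boundary point not in `WFa`
forces the point off the support). Conclusion: `f = 0` on the union of the lines of `A`. -/
theorem support_theorem_xray_transform_R2
    (f : EuclideanSpace ℝ (Fin 2) → ℝ)
    (hf : MeasureTheory.MemLp f 2 MeasureTheory.volume)
    (hsupp : HasCompactSupport f)
    (A : Set (EuclideanSpace ℝ (Fin 2) × EuclideanSpace ℝ (Fin 2)))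
    (hAopen : IsOpen A)
    (hAunit : ∀ ℓ ∈ A, ‖ℓ.2‖ = 1)
    (hdeform : ∀ ℓ ∈ A, ∃ q : ℝ → EuclideanSpace ℝ (Fin 2) × EuclideanSpace ℝ (Fin 2),
      ContinuousOn q (Set.Icc 0 1) ∧ q 0 = ℓ ∧ (∀ s ∈ Set.Icc (0:ℝ) 1, q s ∈ A) ∧
      ∀ t : ℝ, (q 1).1 + t • (q 1).2 ∉ tsupport f)
    (hvanish : ∀ ℓ ∈ A, (∫ t : ℝ, f (ℓ.1 + t • ℓ.2)) = 0)
    (WFa : Set (EuclideanSpace ℝ (Fin 2) × EuclideanSpace ℝ (Fin 2)))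
    (hWF : ∀ ℓ ∈ A, ∀ (s : ℝ) (ξ : EuclideanSpace ℝ (Fin 2)),
      ξ ≠ 0 → ⟪ξ, ℓ.2⟫ = 0 → (ℓ.1 + s • ℓ.2, ξ) ∉ WFa)
    (hKKH : ∀ (p ξ : EuclideanSpace ℝ (Fin 2)), ξ ≠ 0 →
      (∃ φ : EuclideanSpace ℝ (Fin 2) → ℝ, ContDiff ℝ 2 φ ∧ φ p = 0 ∧
        (∀ w, fderiv ℝ φ p w = ⟪ξ, w⟫) ∧
        ∃ U ∈ nhds p, ∀ y ∈ tsupport f ∩ U, φ y ≤ 0) →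
      (p, ξ) ∉ WFa → p ∉ tsupport f) :
    ∀ ℓ ∈ A, ∀ t : ℝ, f (ℓ.1 + t • ℓ.2) = 0 :=
  support_theorem_xray_transform_R2_general f hsupp A hAunit hdeform WFa hWF hKKH
end
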